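/- arXiv:1304.3498 — 2 statements merged into one kernel-verified Lean document; each statement's English description precedes it below -/
import Mathlib

section
/- Suppose p_t(0,w) ≤ A·t^{-1}·exp(−|w|²/(A t)) for all t ≥ |w|, and p_t(0,w) ≤ p_r(0,w) for t ≤ r = |w| when r ≥ A, where A ≥ 10. Then for b ≥ 8A and any w with |w| ≥ b/4, ∫_0^{b²} p_t(0,w) dt ≤ c·A·log A for a universal constant c. -/
open MeasureTheory intervalIntegral

/-!
Split `[0, b²]` at `r` and at `r² / A` (both capped at `b²`). Below `r` monotonicity gives
`p ≤ p r ≤ A / r`, contributing at most `A`. Between `r` and `r² / A` the heat-kernel bound is at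
most `A² / r²` (because `y e^{-y} ≤ 1` with `y = r² / (A t)`), again contributing at most `A`.
Above `r² / A` only `p t ≤ A / t` is used, contributing `A log (b² A / r²) ≤ A log (16 A)` since
`r ≥ b / 4`.
-/

open Set Real

lemma intervalIntegral_le_mul_sub_of_forall_Ioo_le {f : ℝ → ℝ} {a b C : ℝ} (hab : a ≤ b)
    (hf : IntervalIntegrable f volume a b) (h : ∀ t ∈ Ioo a b, f t ≤ C) :
    ∫ t in a..b, f t ≤ C * (b - a) := by
  calc ∫ t in a..b, f t ≤ ∫ _ in a..b, C :=
        integral_mono_on_of_le_Ioo hab hf intervalIntegrable_const h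
    _ = C * (b - a) := by rw [intervalIntegral.integral_const, smul_eq_mul, mul_comm]

lemma intervalIntegral_le_mul_log_of_forall_Ioo_le_div {f : ℝ → ℝ} {a b C : ℝ} (ha : 0 < a)
    (hab : a ≤ b) (hf : IntervalIntegrable f volume a b) (h : ∀ t ∈ Ioo a b, f t ≤ C / t) :
    ∫ t in a..b, f t ≤ C * log (b / a) := by
  have hzero : (0 : ℝ) ∉ uIcc a b := by
    rw [uIcc_of_le hab]
    exact fun h0 => ha.not_ge h0.1
  have hinv : IntervalIntegrable (fun t => C * t⁻¹) volume a b :=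
    (intervalIntegral.intervalIntegrable_inv (fun t ht => ne_of_mem_of_not_mem ht hzero)
      continuousOn_id).const_mul C
  calc ∫ t in a..b, f t ≤ ∫ t in a..b, C * t⁻¹ :=
        integral_mono_on_of_le_Ioo hab hf hinv h
    _ = C * log (b / a) := by rw [intervalIntegral.integral_const_mul, integral_inv hzero]

lemma intervalIntegral_le_of_le_const_of_le_const_of_le_div {f : ℝ → ℝ}
    {a s₁ s₂ b C₁ C₂ C₃ : ℝ} (has₁ : a ≤ s₁) (hs₁₂ : s₁ ≤ s₂) (hs₂b : s₂ ≤ b) (hs₂ : 0 < s₂)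
    (hf : IntervalIntegrable f volume a b) (h₁ : ∀ t ∈ Ioo a s₁, f t ≤ C₁)
    (h₂ : ∀ t ∈ Ioo s₁ s₂, f t ≤ C₂) (h₃ : ∀ t ∈ Ioo s₂ b, f t ≤ C₃ / t) :
    ∫ t in a..b, f t ≤ C₁ * (s₁ - a) + C₂ * (s₂ - s₁) + C₃ * log (b / s₂) := by
  have hsub : ∀ x y, a ≤ x → x ≤ y → y ≤ b → IntervalIntegrable f volume x y :=
    fun x y hx hxy hy => hf.mono_set (uIcc_subset_uIcc (mem_uIcc_of_le hx (hxy.trans hy))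
      (mem_uIcc_of_le (hx.trans hxy) hy))
  rw [← integral_add_adjacent_intervals (hsub a s₁ le_rfl has₁ (hs₁₂.trans hs₂b))
      (hsub s₁ b has₁ (hs₁₂.trans hs₂b) le_rfl),
    ← integral_add_adjacent_intervals (hsub s₁ s₂ has₁ hs₁₂ hs₂b)
      (hsub s₂ b (has₁.trans hs₁₂) hs₂b le_rfl), ← add_assoc]
  gcongr
  · exact intervalIntegral_le_mul_sub_of_forall_Ioo_le has₁
      (hsub a s₁ le_rfl has₁ (hs₁₂.trans hs₂b)) h₁
  · exact intervalIntegral_le_mul_sub_of_forall_Ioo_le hs₁₂ (hsub s₁ s₂ has₁ hs₁₂ hs₂b) h₂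
  · exact intervalIntegral_le_mul_log_of_forall_Ioo_le_div hs₂ hs₂b
      (hsub s₂ b (has₁.trans hs₁₂) hs₂b le_rfl) h₃

lemma div_mul_exp_neg_sq_div_le_div {A t : ℝ} (r : ℝ) (hA : 0 ≤ A) (ht : 0 ≤ t) :
    A / t * exp (-r ^ 2 / (A * t)) ≤ A / t := by
  have hexp : exp (-r ^ 2 / (A * t)) ≤ 1 :=
    exp_le_one_iff.mpr (div_nonpos_of_nonpos_of_nonneg (by nlinarith) (by positivity))
  exact mul_le_of_le_one_right (by positivity) hexp

lemma div_mul_exp_neg_sq_div_le_sq_div_sq {A t r : ℝ} (hA : 0 < A) (ht : 0 < t) (hr : r ≠ 0) :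
    A / t * exp (-r ^ 2 / (A * t)) ≤ A ^ 2 / r ^ 2 := by
  have hy := (mul_exp_neg_le_exp_neg_one (r ^ 2 / (A * t))).trans (exp_le_one_iff.mpr (by norm_num))
  calc A / t * exp (-r ^ 2 / (A * t))
      = A ^ 2 / r ^ 2 * (r ^ 2 / (A * t) * exp (-(r ^ 2 / (A * t)))) := by
        rw [neg_div]; field_simp
    _ ≤ A ^ 2 / r ^ 2 := mul_le_of_le_one_right (by positivity) hy

lemma one_le_log_of_three_le {A : ℝ} (hA : 3 ≤ A) : 1 ≤ log A := by
  rw [le_log_iff_exp_le (by linarith)]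
  linarith [exp_one_lt_d9]

lemma log_sixteen_mul_le {A : ℝ} (hA : 4 ≤ A) : log (16 * A) ≤ 3 * log A := by
  calc log (16 * A) ≤ log (A ^ 3) := log_le_log (by positivity)
        (by nlinarith [mul_le_mul_of_nonneg_left (by nlinarith : 16 ≤ A ^ 2) (by linarith : 0 ≤ A)])
    _ = 3 * log A := by rw [log_pow]; norm_num

/-- Occupation time bound: if `p t ≤ A t⁻¹ exp(−r²/(At))` for `t ≥ r` and
`p t ≤ p r` for `0 < t ≤ r`, with `A ≥ 10`, `b ≥ 8A`, `r ≥ b/4`, then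
`∫_0^{b²} p t dt ≤ c A log A` for a universal constant `c`. -/
theorem stmt_12 :
    ∃ c : ℝ, 0 < c ∧
      ∀ (A b r : ℝ) (p : ℝ → ℝ),
        10 ≤ A → 8 * A ≤ b → b / 4 ≤ r →
        (∀ t, 0 < t → 0 ≤ p t) →
        (∀ t, r ≤ t → p t ≤ A / t * Real.exp (-(r ^ 2) / (A * t))) →
        (∀ t, 0 < t → t ≤ r → p t ≤ p r) →
        IntervalIntegrable p volume 0 (b ^ 2) →
        (∫ t in (0 : ℝ)..(b ^ 2), p t) ≤ c * A * Real.log A := by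
  refine ⟨5, by norm_num, fun A b r p hA hb hr _ hgauss hmono hint => ?_⟩
  have hA0 : 0 < A := by linarith
  have hr0 : 0 < r := by linarith
  have hb0 : 0 < b := by linarith
  have hrr : r ≤ r ^ 2 / A := by rw [le_div_iff₀ hA0]; nlinarith
  set s₁ := min r (b ^ 2)
  set s₂ := min (r ^ 2 / A) (b ^ 2)
  have hs₁ : 0 < s₁ := lt_min hr0 (by positivity)
  have hs₁₂ : s₁ ≤ s₂ := min_le_min_right _ hrr
  have hs₂b : s₂ ≤ b ^ 2 := min_le_right _ _
  have hnear_le : ∀ t ∈ Ioo 0 s₁, p t ≤ A / r := fun t ht =>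
    (hmono t ht.1 (ht.2.le.trans (min_le_left _ _))).trans
      ((hgauss r le_rfl).trans (div_mul_exp_neg_sq_div_le_div r hA0.le hr0.le))
  have hmid_le : ∀ t ∈ Ioo s₁ s₂, p t ≤ A ^ 2 / r ^ 2 := fun t ht =>
    have hrt := ((min_lt_iff.mp ht.1).resolve_right (ht.2.trans_le hs₂b).not_gt).le
    (hgauss t hrt).trans (div_mul_exp_neg_sq_div_le_sq_div_sq hA0 (hr0.trans_le hrt) hr0.ne')
  have hfar_le : ∀ t ∈ Ioo s₂ (b ^ 2), p t ≤ A / t := fun t ht =>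
    have hrt := hrr.trans ((min_lt_iff.mp ht.1).resolve_right ht.2.not_gt).le
    (hgauss t hrt).trans (div_mul_exp_neg_sq_div_le_div r hA0.le (hr0.trans_le hrt).le)
  have hbound := intervalIntegral_le_of_le_const_of_le_const_of_le_div hs₁.le hs₁₂ hs₂b
    (hs₁.trans_le hs₁₂) hint hnear_le hmid_le hfar_le
  have hnear : A / r * (s₁ - 0) ≤ A := by
    rw [sub_zero, div_mul_eq_mul_div, div_le_iff₀ hr0]
    exact mul_le_mul_of_nonneg_left (min_le_left _ _) hA0.le
  have hmid : A ^ 2 / r ^ 2 * (s₂ - s₁) ≤ A :=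
    calc A ^ 2 / r ^ 2 * (s₂ - s₁) ≤ A ^ 2 / r ^ 2 * (r ^ 2 / A) := by
          gcongr; linarith [min_le_left (r ^ 2 / A) (b ^ 2)]
      _ = A := by field_simp
  have hfar : log (b ^ 2 / s₂) ≤ log (16 * A) := by
    refine log_le_log (by positivity) ((div_le_iff₀ (hs₁.trans_le hs₁₂)).mpr ?_)
    rw [mul_min_of_nonneg _ _ (by positivity)]
    exact le_min (by field_simp; nlinarith) (by nlinarith)
  nlinarith [one_le_log_of_three_le (by linarith : (3 : ℝ) ≤ A),
    log_sixteen_mul_le (by linarith : (4 : ℝ) ≤ A)]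
end

section
/- Let m_n = a_n/a_{n-1} and suppose h : B → ℝ is a function on the square B = [0,a]² ∩ ℤ² with h(x,0)=0, h(x,a)=1, extended periodically in the first coordinate. Define f on [0, m·a]² ∩ ℤ² by f(x₁, x₂) = (k + h(x₁, x₂ − k·a))/m for k·a ≤ x₂ ≤ (k+1)·a, 0 ≤ k ≤ m − 1. Then for any edge weights ν on edges of [0,a]² extended periodically with period a in both coordinates, the Dirichlet energy of f on the big square equals m² · (1/m²) · E(h,h) = E(h,h), where E(h,h) = (1/2) Σ_{x∼y} ν_{xy}(h(y)−h(x))² is the energy of h on one period square (with boundary-edge weights halved to avoid double counting). -/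
/-!
Tile `[0, m·a)²` by the `m²` translates of `[0, a)²` by `a • (i, k)`. On the tile with offset
`a • (i, k)`, horizontal periodicity of `h` turns `f` into `(k + h)/m` translated by that offset,
including at the upper end of each vertical edge, since the description of `f` on row `k` covers
the closed range `k·a ≤ x₂ ≤ (k+1)·a`. As `ν` is invariant under the translation, every edge
energy in the tile is the corresponding edge energy of `h` divided by `m²`, and the `m²` tiles
together give `E(h,h)`.
-/

open Finset

/-- The Dirichlet energy of `f` over the period cell `[0,N)²`, counting each edge of
the periodic lattice once per period (equivalently, with boundary edge weights
halved to avoid double counting): sum over horizontal and vertical edges issued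
from points of `[0,N)² ∩ ℤ²`. -/
def cellEnergy (ν : ℤ × ℤ → ℤ × ℤ → ℝ) (f : ℤ × ℤ → ℝ) (N : ℕ) : ℝ :=
  ∑ x ∈ Finset.range N, ∑ y ∈ Finset.range N,
    (ν ((x : ℤ), (y : ℤ)) ((x : ℤ) + 1, (y : ℤ)) *
        (f ((x : ℤ) + 1, (y : ℤ)) - f ((x : ℤ), (y : ℤ))) ^ 2 +
      ν ((x : ℤ), (y : ℤ)) ((x : ℤ), (y : ℤ) + 1) *
        (f ((x : ℤ), (y : ℤ) + 1) - f ((x : ℤ), (y : ℤ))) ^ 2)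

lemma sum_range_mul_eq_sum_sum {M : Type*} [AddCommMonoid M] (m a : ℕ) (g : ℕ → M) :
    ∑ x ∈ range (m * a), g x = ∑ i ∈ range m, ∑ x ∈ range a, g (i * a + x) := by
  induction m with
  | zero => simp
  | succ m ih => rw [Nat.succ_mul, sum_range_add, ih, sum_range_succ]

lemma sum_sum_range_mul_of_tile {M : Type*} [AddCommMonoid M] {m a : ℕ} {g G : ℕ → ℕ → M}
    (hg : ∀ i < m, ∀ k < m, ∀ x < a, ∀ y < a, g (i * a + x) (k * a + y) = G x y) :
    ∑ X ∈ range (m * a), ∑ Y ∈ range (m * a), g X Y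
      = (m * m) • ∑ x ∈ range a, ∑ y ∈ range a, G x y := by
  calc ∑ X ∈ range (m * a), ∑ Y ∈ range (m * a), g X Y
      = ∑ i ∈ range m, ∑ x ∈ range a, ∑ k ∈ range m, ∑ y ∈ range a, G x y := by
        simp only [sum_range_mul_eq_sum_sum m a]
        refine sum_congr rfl fun i hi => sum_congr rfl fun x hx =>
          sum_congr rfl fun k hk => sum_congr rfl fun y hy => ?_
        simp only [mem_range] at hi hx hk hy
        exact hg i hi k hk x hx y hy
    _ = (m * m) • ∑ x ∈ range a, ∑ y ∈ range a, G x y := by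
        simp only [sum_const, card_range, ← smul_sum, mul_smul]

section

variable (ν : ℤ × ℤ → ℤ × ℤ → ℝ)

def edgeEnergy (f : ℤ × ℤ → ℝ) (p : ℤ × ℤ) : ℝ :=
  ν p (p + (1, 0)) * (f (p + (1, 0)) - f p) ^ 2 + ν p (p + (0, 1)) * (f (p + (0, 1)) - f p) ^ 2

lemma cellEnergy_eq_sum_edgeEnergy (f : ℤ × ℤ → ℝ) (N : ℕ) :
    cellEnergy ν f N = ∑ x ∈ range N, ∑ y ∈ range N, edgeEnergy ν f ((x : ℤ), (y : ℤ)) := by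
  simp [cellEnergy, edgeEnergy]

lemma edgeEnergy_add_of_invariant {t : ℤ × ℤ} (hν : ∀ p q, ν (p + t) (q + t) = ν p q)
    (f : ℤ × ℤ → ℝ) (p : ℤ × ℤ) :
    edgeEnergy ν f (p + t) = edgeEnergy ν (fun q => f (q + t)) p := by
  simp only [edgeEnergy, add_right_comm p t, hν]

lemma edgeEnergy_congr {f g : ℤ × ℤ → ℝ} {p : ℤ × ℤ} (h₀ : f p = g p)
    (h₁ : f (p + (1, 0)) = g (p + (1, 0))) (h₂ : f (p + (0, 1)) = g (p + (0, 1))) :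
    edgeEnergy ν f p = edgeEnergy ν g p := by
  simp only [edgeEnergy, h₀, h₁, h₂]

lemma edgeEnergy_add_div (g : ℤ × ℤ → ℝ) (c m : ℝ) (p : ℤ × ℤ) :
    edgeEnergy ν (fun q => (c + g q) / m) p = edgeEnergy ν g p / m ^ 2 := by
  simp only [edgeEnergy, div_sub_div_same, add_sub_add_left_eq_sub, div_pow]
  ring

end

theorem stmt_16_general (a m : ℕ) (hm : 1 ≤ m)
    (h : ℤ × ℤ → ℝ)
    (hper : ∀ x y : ℤ, h (x + (a : ℤ), y) = h (x, y))
    (ν : ℤ × ℤ → ℤ × ℤ → ℝ)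
    (hνper : ∀ p q v : ℤ × ℤ, ν (p + (a : ℤ) • v) (q + (a : ℤ) • v) = ν p q)
    (f : ℤ × ℤ → ℝ)
    (hf : ∀ (x₁ x₂ : ℤ) (k : ℕ), k < m → (k : ℤ) * a ≤ x₂ → x₂ ≤ ((k : ℤ) + 1) * a →
      f (x₁, x₂) = ((k : ℝ) + h (x₁, x₂ - (k : ℤ) * a)) / m) :
    cellEnergy ν f (m * a) = cellEnergy ν h a := by
  have hblock : ∀ (i k : ℕ), k < m → ∀ q : ℤ × ℤ, 0 ≤ q.2 → q.2 ≤ a →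
      f (q + (a : ℤ) • ((i : ℤ), (k : ℤ))) = (k + h q) / m := by
    rintro i k hk ⟨x, y⟩ hy₀ hya
    have hperi : h (x + i * a, y) = h (x, y) :=
      Function.Periodic.nat_mul (f := fun x => h (x, y)) (hper · y) i x
    simpa [mul_comm (a : ℤ), hperi] using hf (x + a * i) (y + a * k) k hk (by linarith) (by linarith)
  have hm₀ : (m : ℝ) ≠ 0 := by positivity
  rw [cellEnergy_eq_sum_edgeEnergy, cellEnergy_eq_sum_edgeEnergy,
    sum_sum_range_mul_of_tile (G := fun x y => edgeEnergy ν h ((x : ℤ), (y : ℤ)) / m ^ 2)]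
  · simp only [nsmul_eq_mul, ← sum_div]
    push_cast
    field_simp
  · intro i _ k hk x _ y hy
    have ht : (((i * a + x : ℕ) : ℤ), ((k * a + y : ℕ) : ℤ))
        = ((x : ℤ), (y : ℤ)) + (a : ℤ) • ((i : ℤ), (k : ℤ)) := by
      ext <;> simp <;> ring
    rw [ht, edgeEnergy_add_of_invariant ν (hνper · · _), ← edgeEnergy_add_div ν h k m]
    apply edgeEnergy_congr <;> apply hblock i k hk <;> simp <;> omega

/-- Pasting `m²` scaled copies of `h` (scaled by `1/m`, shifted by `k/m`) into the
tiling of `[0, m·a]²` by period-`a` squares yields total energy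
`m² · (1/m²) · E(h,h) = E(h,h)`, for any edge weights `ν` periodic with period `a`
in both coordinates, when `h(·,0) = 0`, `h(·,a) = 1` and `h` is horizontally
`a`-periodic. -/
theorem stmt_16 (a m : ℕ) (ha : 1 ≤ a) (hm : 1 ≤ m)
    (h : ℤ × ℤ → ℝ)
    (hbot : ∀ x : ℤ, h (x, 0) = 0) (htop : ∀ x : ℤ, h (x, (a : ℤ)) = 1)
    (hper : ∀ x y : ℤ, h (x + (a : ℤ), y) = h (x, y))
    (ν : ℤ × ℤ → ℤ × ℤ → ℝ)
    (hνper : ∀ p q v : ℤ × ℤ, ν (p + (a : ℤ) • v) (q + (a : ℤ) • v) = ν p q)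
    (f : ℤ × ℤ → ℝ)
    (hf : ∀ (x₁ x₂ : ℤ) (k : ℕ), k < m → (k : ℤ) * a ≤ x₂ → x₂ ≤ ((k : ℤ) + 1) * a →
      f (x₁, x₂) = ((k : ℝ) + h (x₁, x₂ - (k : ℤ) * a)) / m) :
    cellEnergy ν f (m * a) = cellEnergy ν h a :=
  stmt_16_general a m hm h hper ν hνper f hf
end
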